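/- Let φ : C → X be a covering map, x₀ ∈ X, E a set with a left action of Γ = π₁(X, x₀), Ψ₀ : E → φ⁻¹(x₀) a Γ-covariant bijection, and Ψ the trivialization determined by Ψ₀. Let σ be a path in X from x₀ to a point x₁, set Γ' = π₁(X, x₁), and let Γ' act on E by [μ']·e := [σμ'σ⁻¹]·e for loops μ' based at x₁ (the action transported through the isomorphism Γ → Γ', [μ] ↦ [σ⁻¹μσ]). Define Ψ₁ : E → φ⁻¹(x₁) by Ψ₁(e) = Ψ_{σ⁻¹}(e). Then Ψ₁ is a Γ'-covariant bijection, and, denoting by Ψ' the trivialization (with respect to the basepoint x₁) determined by Ψ₁, one has Ψ_λ(e) = Ψ'_{λσ}(e) for every path λ in X ending at x₀ and every e ∈ E. -/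

import Mathlib

/-!
Everything follows from existence and uniqueness of path lifts. `Ψ₁ = Ψ_{σ⁻¹}` moves the fiber
over `x₀` to the fiber over `x₁` along lifts of `σ⁻¹`, so it is a bijection. Given a lift of a loop
`μ'` at `x₁` ending at `Ψ₁ e`, precede it by a lift of `σ` and follow it by the lift of `σ⁻¹` from
`Ψ₁ e` to `Ψ₀ e`: this lifts `σμ'σ⁻¹`, so `Γ`-covariance identifies its starting point, and the
reversed lift of `σ` then shows `Γ'`-covariance of `Ψ₁`. Likewise the lift of `λ` ending at `Ψ₀ e`
followed by the reversed lift of `σ⁻¹` lifts `λσ` and ends at `Ψ₁ e`, whence `Ψ_λ = Ψ'_{λσ}`.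
-/

/-- The path-homotopy class of a loop, as an element of the fundamental group. -/
noncomputable def loopClass {X : Type*} [TopologicalSpace X] {x : X} (μ : Path x x) :
    FundamentalGroup X x :=
  (show FundamentalGroupoid.mk x ⟶ FundamentalGroupoid.mk x from
    Quotient.mk (Path.Homotopic.setoid x x) μ)

/-- `Ψ₀ : E → C` is `Γ`-covariant (with respect to a covering map `φ : C → X`, a basepoint
`x₀` and an action of `π₁(X, x₀)` on `E`) if for every loop `μ` based at `x₀` and every
`e ∈ E`, any lift of `μ` to `C` ending at `Ψ₀ e` starts at `Ψ₀ ([μ] • e)`. -/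
def GammaCovariant {C X : Type} [TopologicalSpace C] [TopologicalSpace X]
    (φ : C → X) (x₀ : X) {E : Type} [MulAction (FundamentalGroup X x₀) E]
    (Ψ₀ : E → C) : Prop :=
  ∀ (μ : Path x₀ x₀) (e : E) (γ' : C(unitInterval, C)),
    (∀ t, φ (γ' t) = μ t) → γ' 1 = Ψ₀ e → γ' 0 = Ψ₀ (loopClass μ • e)

/-- `Ψ` is the trivialization of `φ` determined by `Ψ₀`: for each `x : X`, each path `l`
from `x` to `x₀` and each `e`, `Ψ x l e` is the initial point of the (unique) lift of `l`
ending at `Ψ₀ e`. -/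
def IsTrivializationOf {C X : Type} [TopologicalSpace C] [TopologicalSpace X]
    (φ : C → X) (x₀ : X) {E : Type} (Ψ₀ : E → C)
    (Ψ : ∀ x : X, Path x x₀ → E → C) : Prop :=
  ∀ (x : X) (l : Path x x₀) (e : E) (γ' : C(unitInterval, C)),
    (∀ t, φ (γ' t) = l t) → γ' 1 = Ψ₀ e → γ' 0 = Ψ x l e

/-- `γ` lifts `l` along `φ`. The endpoints of `γ` are not tied to those of `l` in the type, so
lifts can be concatenated and reversed like the paths they lift. -/
def Path.IsLift {C X : Type} [TopologicalSpace C] [TopologicalSpace X] (φ : C → X)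
    {c d : C} {x y : X} (γ : Path c d) (l : Path x y) : Prop :=
  ∀ t, φ (γ t) = l t

namespace Path.IsLift

variable {C X : Type} [TopologicalSpace C] [TopologicalSpace X] {φ : C → X}
  {c d e : C} {x y z : X}

theorem symm {γ : Path c d} {l : Path x y} (h : γ.IsLift φ l) : γ.symm.IsLift φ l.symm :=
  fun t => h (unitInterval.symm t)

theorem trans {γ : Path c d} {δ : Path d e} {l : Path x y} {m : Path y z}
    (hγ : γ.IsLift φ l) (hδ : δ.IsLift φ m) : (γ.trans δ).IsLift φ (l.trans m) := by
  intro t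
  simp only [Path.trans_apply]
  split_ifs
  · exact hγ _
  · exact hδ _

end Path.IsLift

namespace IsCoveringMap

variable {C X : Type} [TopologicalSpace C] [TopologicalSpace X] {φ : C → X}
  {x y : X}

theorem exists_isLift_of_source (hφ : IsCoveringMap φ) (l : Path x y) {c : C} (hc : φ c = x) :
    ∃ (d : C) (γ : Path c d), γ.IsLift φ l := by
  obtain ⟨Γ, hΓ, hΓ0⟩ := hφ.exists_path_lifts l.toContinuousMap c (by simp [hc])
  exact ⟨Γ 1, ⟨Γ, hΓ0, rfl⟩, fun t => congrFun hΓ t⟩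

theorem exists_isLift_of_target (hφ : IsCoveringMap φ) (l : Path x y) {d : C} (hd : φ d = y) :
    ∃ (c : C) (γ : Path c d), γ.IsLift φ l := by
  obtain ⟨c, γ, hγ⟩ := hφ.exists_isLift_of_source l.symm hd
  exact ⟨c, γ.symm, by simpa using hγ.symm⟩

theorem target_eq_of_isLift (hφ : IsCoveringMap φ) {l : Path x y} {c d d' : C}
    {γ : Path c d} {γ' : Path c d'} (h : γ.IsLift φ l) (h' : γ'.IsLift φ l) : d = d' := by
  have hγ : (γ : unitInterval → C) = γ' :=
    hφ.eq_of_comp_eq γ.continuous γ'.continuous (funext fun t => (h t).trans (h' t).symm) 0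
      (γ.source.trans γ'.source.symm)
  simpa using congrFun hγ 1

end IsCoveringMap

theorem GammaCovariant.eq_of_isLift {C X : Type} [TopologicalSpace C] [TopologicalSpace X]
    {φ : C → X} {x₀ : X} {E : Type} [MulAction (FundamentalGroup X x₀) E] {Ψ₀ : E → C}
    (hcov : GammaCovariant φ x₀ Ψ₀) {μ : Path x₀ x₀} {e : E} {c : C} {γ : Path c (Ψ₀ e)}
    (hγ : γ.IsLift φ μ) : Ψ₀ (loopClass μ • e) = c :=
  (hcov μ e γ.toContinuousMap hγ γ.target).symm.trans γ.source

namespace IsTrivializationOf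

variable {C X : Type} [TopologicalSpace C] [TopologicalSpace X] {φ : C → X} {x₀ x₁ : X}
  {E : Type} {Ψ₀ : E → C} {Ψ : ∀ x : X, Path x x₀ → E → C}

theorem eq_of_isLift (hΨ : IsTrivializationOf φ x₀ Ψ₀ Ψ) {x : X} {l : Path x x₀} {e : E}
    {c : C} {γ : Path c (Ψ₀ e)} (hγ : γ.IsLift φ l) : Ψ x l e = c :=
  (hΨ x l e γ.toContinuousMap hγ γ.target).symm.trans γ.source

theorem exists_isLift (hΨ : IsTrivializationOf φ x₀ Ψ₀ Ψ) (hφ : IsCoveringMap φ)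
    (hfib : ∀ e, φ (Ψ₀ e) = x₀) {x : X} (l : Path x x₀) (e : E) :
    ∃ γ : Path (Ψ x l e) (Ψ₀ e), γ.IsLift φ l := by
  obtain ⟨c, γ, hγ⟩ := hφ.exists_isLift_of_target l (hfib e)
  rw [hΨ.eq_of_isLift hγ]
  exact ⟨γ, hγ⟩

theorem apply_mem_fiber (hΨ : IsTrivializationOf φ x₀ Ψ₀ Ψ) (hφ : IsCoveringMap φ)
    (hfib : ∀ e, φ (Ψ₀ e) = x₀) {x : X} (l : Path x x₀) (e : E) : φ (Ψ x l e) = x := by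
  obtain ⟨γ, hγ⟩ := hΨ.exists_isLift hφ hfib l e
  simpa using hγ 0

theorem injective (hΨ : IsTrivializationOf φ x₀ Ψ₀ Ψ) (hφ : IsCoveringMap φ)
    (hfib : ∀ e, φ (Ψ₀ e) = x₀) (hinj : Function.Injective Ψ₀) {x : X} (l : Path x x₀) :
    Function.Injective (Ψ x l) := by
  intro e e' he
  obtain ⟨γ, hγ⟩ := hΨ.exists_isLift hφ hfib l e
  obtain ⟨γ', hγ'⟩ := he ▸ hΨ.exists_isLift hφ hfib l e'
  exact hinj (hφ.target_eq_of_isLift hγ hγ')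

theorem exists_apply_eq (hΨ : IsTrivializationOf φ x₀ Ψ₀ Ψ) (hφ : IsCoveringMap φ)
    (hsurj : ∀ c : C, φ c = x₀ → ∃ e, Ψ₀ e = c) {x : X} (l : Path x x₀) {c : C}
    (hc : φ c = x) : ∃ e, Ψ x l e = c := by
  obtain ⟨d, γ, hγ⟩ := hφ.exists_isLift_of_source l hc
  obtain ⟨e, rfl⟩ := hsurj d (by simpa using hγ 1)
  exact ⟨e, hΨ.eq_of_isLift hγ⟩

theorem apply_symm_eq_of_isLift [MulAction (FundamentalGroup X x₀) E]
    (hΨ : IsTrivializationOf φ x₀ Ψ₀ Ψ) (hφ : IsCoveringMap φ) (hfib : ∀ e, φ (Ψ₀ e) = x₀)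
    (hcov : GammaCovariant φ x₀ Ψ₀) (σ : Path x₀ x₁) {μ' : Path x₁ x₁} {e : E} {c : C}
    {γ : Path c (Ψ x₁ σ.symm e)} (hγ : γ.IsLift φ μ') :
    Ψ x₁ σ.symm (loopClass ((σ.trans μ').trans σ.symm) • e) = c := by
  obtain ⟨δ, hδ⟩ := hΨ.exists_isLift hφ hfib σ.symm e
  obtain ⟨b, β, hβ⟩ := hφ.exists_isLift_of_target σ (d := c) (by simpa using hγ 0)
  obtain rfl : Ψ₀ (loopClass ((σ.trans μ').trans σ.symm) • e) = b :=
    hcov.eq_of_isLift ((hβ.trans hγ).trans hδ)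
  exact hΨ.eq_of_isLift hβ.symm

theorem apply_trans_eq (hΨ : IsTrivializationOf φ x₀ Ψ₀ Ψ) (hφ : IsCoveringMap φ)
    (hfib : ∀ e, φ (Ψ₀ e) = x₀) (σ : Path x₀ x₁) {Ψ' : ∀ x : X, Path x x₁ → E → C}
    (hΨ' : IsTrivializationOf φ x₁ (fun e => Ψ x₁ σ.symm e) Ψ') {x : X} (l : Path x x₀)
    (e : E) : Ψ' x (l.trans σ) e = Ψ x l e := by
  obtain ⟨γ, hγ⟩ := hΨ.exists_isLift hφ hfib l e
  obtain ⟨δ, hδ⟩ := hΨ.exists_isLift hφ hfib σ.symm e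
  exact hΨ'.eq_of_isLift (γ := γ.trans δ.symm) (hγ.trans (by simpa using hδ.symm))

end IsTrivializationOf

/-- change of basepoint. Let `φ : C → X` be a covering map, `x₀ ∈ X`, `E` a
set with a left action of `Γ = π₁(X, x₀)`, `Ψ₀ : E → φ⁻¹(x₀)` a `Γ`-covariant bijection, and
`Ψ` the trivialization determined by `Ψ₀`. Let `σ` be a path from `x₀` to `x₁`, and let
`Γ' = π₁(X, x₁)` act on `E` by `[μ'] • e := [σ μ' σ⁻¹] • e`. Define `Ψ₁ : E → φ⁻¹(x₁)` by
`Ψ₁ e = Ψ_{σ⁻¹} e`. Then `Ψ₁` is a `Γ'`-covariant bijection, and, denoting by `Ψ'` the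
trivialization (with respect to the basepoint `x₁`) determined by `Ψ₁`, one has
`Ψ_λ e = Ψ'_{λσ} e` for every path `λ` ending at `x₀` and every `e`. -/
theorem change_of_basepoint
    {C X : Type} [TopologicalSpace C] [TopologicalSpace X]
    (φ : C → X) (hφ : IsCoveringMap φ) (x₀ : X)
    (E : Type) [MulAction (FundamentalGroup X x₀) E]
    (Ψ₀ : E → C) (hfib : ∀ e, φ (Ψ₀ e) = x₀) (hinj : Function.Injective Ψ₀)
    (hsurj : ∀ c : C, φ c = x₀ → ∃ e, Ψ₀ e = c)
    (hcov : GammaCovariant φ x₀ Ψ₀)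
    (Ψ : ∀ x : X, Path x x₀ → E → C) (hΨ : IsTrivializationOf φ x₀ Ψ₀ Ψ)
    (x₁ : X) (σ : Path x₀ x₁) :
    -- `Ψ₁ := Ψ_{σ⁻¹}` is a bijection from `E` onto the fiber `φ⁻¹(x₁)` …
    (∀ e, φ (Ψ x₁ σ.symm e) = x₁) ∧
    Function.Injective (fun e => Ψ x₁ σ.symm e) ∧
    (∀ c : C, φ c = x₁ → ∃ e, Ψ x₁ σ.symm e = c) ∧
    -- … which is `Γ'`-covariant for the action of `Γ' = π₁(X, x₁)` transported through `σ`: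
    (∀ (μ' : Path x₁ x₁) (e : E) (γ' : C(unitInterval, C)),
      (∀ t, φ (γ' t) = μ' t) → γ' 1 = Ψ x₁ σ.symm e →
      γ' 0 = Ψ x₁ σ.symm (loopClass ((σ.trans μ').trans σ.symm) • e)) ∧
    -- and the trivialization `Ψ'` determined by `Ψ₁` satisfies `Ψ_λ e = Ψ'_{λσ} e`:
    (∀ Ψ' : ∀ x : X, Path x x₁ → E → C,
      IsTrivializationOf φ x₁ (fun e => Ψ x₁ σ.symm e) Ψ' →
      ∀ (x : X) (l : Path x x₀) (e : E), Ψ x l e = Ψ' x (l.trans σ) e) :=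
  ⟨hΨ.apply_mem_fiber hφ hfib σ.symm, hΨ.injective hφ hfib hinj σ.symm,
    fun _ => hΨ.exists_apply_eq hφ hsurj σ.symm,
    fun _ _ γ' hγ' hγ'1 =>
      (hΨ.apply_symm_eq_of_isLift hφ hfib hcov σ (γ := ⟨γ', rfl, hγ'1⟩) hγ').symm,
    fun _ hΨ' _ l e => (hΨ.apply_trans_eq hφ hfib σ hΨ' l e).symm⟩
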